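/- arXiv:1212.6243 — 8 statements merged into one kernel-verified Lean document; each statement's English description precedes it below -/
import Mathlib

section
/- Let X and Y be ordered vector spaces with Y Dedekind complete, let L ⊆ X be a linear subspace such that X₊ + L = X, let p : X₊ → Y be superlinear (superadditive and positively homogeneous), and let T₀ : L → Y be linear with T₀x ≥ p(x) for all x ∈ L ∩ X₊. Then there exists a linear extension T : X → Y of T₀ with Tx ≥ p(x) for all x ∈ X₊. -/
/-!
Zorn's lemma reduces the theorem to extending a partial linear map `f` that dominates `p` on the
positive cone of its domain by one vector `y ∉ dom f`. The value `d` at `y` must satisfy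
`p (x + y) - f x ≤ d ≤ f x' - p (x' - y)` whenever `x + y ≥ 0` and `x' - y ≥ 0`. Superadditivity
of `p` puts every left-hand side below every right-hand side, both families are nonempty because
`X₊ + L = X`, and Dedekind completeness of `Y` provides `d`. Positive homogeneity of `p` then
carries the inequality from the vectors `x ± y` to every positive `x + r • y`.
-/

open Set

/-- `Y` is Dedekind complete: every nonempty set bounded above has a least upper bound. -/
def DedekindComplete (Y : Type*) [Preorder Y] : Prop :=
  ∀ S : Set Y, S.Nonempty → BddAbove S → ∃ y, IsLUB S y

theorem DedekindComplete.exists_between_of_forall_le {Y : Type*} [Preorder Y]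
    (hY : DedekindComplete Y) {S T : Set Y} (hS : S.Nonempty) (hT : T.Nonempty)
    (hST : ∀ s ∈ S, ∀ t ∈ T, s ≤ t) : ∃ d, (∀ s ∈ S, s ≤ d) ∧ ∀ t ∈ T, d ≤ t := by
  obtain ⟨t₀, ht₀⟩ := hT
  obtain ⟨d, hd⟩ := hY S hS ⟨t₀, fun s hs ↦ hST s hs t₀ ht₀⟩
  exact ⟨d, hd.1, fun t ht ↦ hd.2 fun s hs ↦ hST s hs t ht⟩

namespace LinearPMap

theorem lt_supSpanSingleton {K E F : Type*} [Field K] [AddCommGroup E] [Module K E]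
    [AddCommGroup F] [Module K F] (f : E →ₗ.[K] F) {x : E} (y : F) (hx : x ∉ f.domain) :
    f < f.supSpanSingleton x y hx := by
  refine lt_of_le_not_ge (f.left_le_sup _ _) fun h ↦ hx (h.1 ?_)
  rw [domain_supSpanSingleton]
  exact Submodule.mem_sup_right (Submodule.mem_span_singleton_self x)

section Preorder

variable {𝕜 X Y : Type*} [Ring 𝕜] [AddCommGroup X] [Preorder X] [Module 𝕜 X]
  [AddCommGroup Y] [Preorder Y] [Module 𝕜 Y] {p : X → Y}

def DominatesOnPos (f : X →ₗ.[𝕜] Y) (p : X → Y) : Prop :=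
  ∀ x : f.domain, 0 ≤ (x : X) → p x ≤ f x

theorem DominatesOnPos.sSup {c : Set (X →ₗ.[𝕜] Y)} (hne : c.Nonempty) (hc : DirectedOn (· ≤ ·) c)
    (hcp : ∀ f ∈ c, f.DominatesOnPos p) : (LinearPMap.sSup c hc).DominatesOnPos p := by
  rintro ⟨x, hx⟩ hx₀
  obtain ⟨f, hfc, hxf⟩ := (mem_domain_sSup_iff hne hc).1 hx
  exact (hcp f hfc ⟨x, hxf⟩ hx₀).trans_eq (LinearPMap.sSup_apply hc hfc ⟨x, hxf⟩).symm

end Preorder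

section OrderedAddCommGroup

variable {𝕜 X Y : Type*} [Ring 𝕜]
  [AddCommGroup X] [PartialOrder X] [IsOrderedAddMonoid X] [Module 𝕜 X]
  [AddCommGroup Y] [PartialOrder Y] [IsOrderedAddMonoid Y] [Module 𝕜 Y]
  {p : X → Y} {f : X →ₗ.[𝕜] Y}

theorem DominatesOnPos.exists_extension_value (hY : DedekindComplete Y)
    (hp_add : ∀ a b : X, 0 ≤ a → 0 ≤ b → p a + p b ≤ p (a + b)) (hf : f.DominatesOnPos p)
    (hdense : ∀ y, ∃ x : f.domain, 0 ≤ (x : X) + y) (y : X) :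
    ∃ d, (∀ x : f.domain, 0 ≤ (x : X) + y → p (x + y) ≤ f x + d) ∧
      ∀ x : f.domain, 0 ≤ (x : X) - y → p (x - y) ≤ f x - d := by
  have hST : ∀ x x' : f.domain, 0 ≤ (x : X) + y → 0 ≤ (x' : X) - y →
      p (x + y) - f x ≤ f x' - p (x' - y) := by
    intro x x' hx hx'
    have hsum : (x : X) + y + ((x' : X) - y) = ↑(x + x') := by push_cast; abel
    rw [sub_le_sub_iff, add_comm (f x'), ← LinearPMap.map_add]
    calc p (x + y) + p (x' - y) ≤ p ↑(x + x') := hsum ▸ hp_add _ _ hx hx'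
      _ ≤ f (x + x') := hf _ (hsum ▸ add_nonneg hx hx')
  have hdense_neg : ∃ x : f.domain, 0 ≤ (x : X) - y := by
    simpa only [sub_eq_add_neg] using hdense (-y)
  obtain ⟨d, hSd, hdT⟩ := hY.exists_between_of_forall_le
    (S := (fun x : f.domain ↦ p (x + y) - f x) '' {x : f.domain | 0 ≤ (x : X) + y})
    (T := (fun x : f.domain ↦ f x - p (x - y)) '' {x : f.domain | 0 ≤ (x : X) - y})
    (Nonempty.image _ (hdense y)) (Nonempty.image _ hdense_neg)
    (by simp only [forall_mem_image]; exact fun x hx x' hx' ↦ hST x x' hx hx')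
  simp only [forall_mem_image] at hSd hdT
  exact ⟨d, fun x hx ↦ sub_le_iff_le_add'.1 (hSd hx), fun x hx ↦ le_sub_comm.1 (hdT hx)⟩

end OrderedAddCommGroup

section OrderedModule

variable {𝕜 X Y : Type*} [Field 𝕜] [LinearOrder 𝕜] [IsStrictOrderedRing 𝕜]
  [AddCommGroup X] [PartialOrder X] [Module 𝕜 X] [PosSMulMono 𝕜 X]
  [AddCommGroup Y] [PartialOrder Y] [Module 𝕜 Y] [PosSMulMono 𝕜 Y]
  {p : X → Y} {f : X →ₗ.[𝕜] Y}

theorem DominatesOnPos.supSpanSingleton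
    (hp_smul : ∀ (c : 𝕜) (a : X), 0 ≤ c → 0 ≤ a → p (c • a) = c • p a) (hf : f.DominatesOnPos p)
    {y : X} (hy : y ∉ f.domain) {d : Y}
    (hd_add : ∀ x : f.domain, 0 ≤ (x : X) + y → p (x + y) ≤ f x + d)
    (hd_sub : ∀ x : f.domain, 0 ≤ (x : X) - y → p (x - y) ≤ f x - d) :
    (f.supSpanSingleton y d hy).DominatesOnPos p := by
  rintro ⟨_, hz⟩ hz₀
  obtain ⟨x, hx, _, hry, rfl⟩ := Submodule.mem_sup.1 hz
  obtain ⟨r, rfl⟩ := Submodule.mem_span_singleton.1 hry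
  simp only at hz₀ ⊢
  rw [supSpanSingleton_apply_mk _ _ _ _ _ hx]
  have hscale {c : 𝕜} (hc : 0 < c) {w : Y}
      (hw : 0 ≤ c⁻¹ • (x + r • y) → p (c⁻¹ • (x + r • y)) ≤ w) : p (x + r • y) ≤ c • w := by
    have hz' : 0 ≤ c⁻¹ • (x + r • y) := smul_nonneg (inv_nonneg.2 hc.le) hz₀
    calc p (x + r • y) = c • p (c⁻¹ • (x + r • y)) := by
          rw [← hp_smul c _ hc.le hz', smul_inv_smul₀ hc.ne']
      _ ≤ c • w := smul_le_smul_of_nonneg_left (hw hz') hc.le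
  rcases lt_trichotomy r 0 with hr | rfl | hr
  · have key : (-r)⁻¹ • (x + r • y) = ↑((-r)⁻¹ • (⟨x, hx⟩ : f.domain)) - y := by
      rw [Submodule.coe_smul, smul_add, smul_smul, inv_neg, neg_mul, inv_mul_cancel₀ hr.ne,
        neg_one_smul, sub_eq_add_neg]
    calc p (x + r • y) ≤ (-r) • (f ((-r)⁻¹ • ⟨x, hx⟩) - d) :=
          hscale (neg_pos.2 hr) (key ▸ hd_sub _)
      _ = f ⟨x, hx⟩ + r • d := by
          rw [LinearPMap.map_smul, smul_sub, smul_inv_smul₀ (neg_ne_zero.2 hr.ne), neg_smul,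
            sub_neg_eq_add]
  · simpa using hf ⟨x, hx⟩ (by simpa using hz₀)
  · have key : r⁻¹ • (x + r • y) = ↑(r⁻¹ • (⟨x, hx⟩ : f.domain)) + y := by
      rw [Submodule.coe_smul, smul_add, inv_smul_smul₀ hr.ne']
    calc p (x + r • y) ≤ r • (f (r⁻¹ • ⟨x, hx⟩) + d) := hscale hr (key ▸ hd_add _)
      _ = f ⟨x, hx⟩ + r • d := by
          rw [LinearPMap.map_smul, smul_add, smul_inv_smul₀ hr.ne']

variable [IsOrderedAddMonoid X] [IsOrderedAddMonoid Y]

theorem DominatesOnPos.exists_lt (hY : DedekindComplete Y)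
    (hp_add : ∀ a b : X, 0 ≤ a → 0 ≤ b → p a + p b ≤ p (a + b))
    (hp_smul : ∀ (c : 𝕜) (a : X), 0 ≤ c → 0 ≤ a → p (c • a) = c • p a) (hf : f.DominatesOnPos p)
    (hdense : ∀ y, ∃ x : f.domain, 0 ≤ (x : X) + y) (hdom : f.domain ≠ ⊤) :
    ∃ g, f < g ∧ g.DominatesOnPos p := by
  obtain ⟨y, -, hy⟩ := SetLike.exists_of_lt (lt_top_iff_ne_top.2 hdom)
  obtain ⟨d, hd_add, hd_sub⟩ := hf.exists_extension_value hY hp_add hdense y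
  exact ⟨_, lt_supSpanSingleton f d hy, hf.supSpanSingleton hp_smul hy hd_add hd_sub⟩

theorem DominatesOnPos.exists_domain_eq_top (hY : DedekindComplete Y)
    (hp_add : ∀ a b : X, 0 ≤ a → 0 ≤ b → p a + p b ≤ p (a + b))
    (hp_smul : ∀ (c : 𝕜) (a : X), 0 ≤ c → 0 ≤ a → p (c • a) = c • p a) (hf : f.DominatesOnPos p)
    (hdense : ∀ y, ∃ x : f.domain, 0 ≤ (x : X) + y) :
    ∃ g, f ≤ g ∧ g.domain = ⊤ ∧ g.DominatesOnPos p := by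
  obtain ⟨g, hfg, hg, hmax⟩ := zorn_le_nonempty₀ {g : X →ₗ.[𝕜] Y | g.DominatesOnPos p}
    (fun c hcS hc g hg ↦ ⟨LinearPMap.sSup c hc.directedOn,
      DominatesOnPos.sSup ⟨g, hg⟩ hc.directedOn fun _ h ↦ hcS h,
      fun _ ↦ LinearPMap.le_sSup hc.directedOn⟩)
    f hf
  refine ⟨g, hfg, by_contra fun hdom ↦ ?_, hg⟩
  have hgdense (y : X) : ∃ x : g.domain, 0 ≤ (x : X) + y :=
    let ⟨x, hx⟩ := hdense y
    ⟨Submodule.inclusion hfg.1 x, hx⟩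
  obtain ⟨g', hgg', hg'⟩ := hg.exists_lt hY hp_add hp_smul hgdense hdom
  exact hgg'.not_ge (hmax hg' hgg'.le)

end OrderedModule

end LinearPMap

theorem stmt0 {X Y : Type*}
    [AddCommGroup X] [PartialOrder X] [IsOrderedAddMonoid X] [Module ℝ X] [PosSMulStrictMono ℝ X]
    [AddCommGroup Y] [PartialOrder Y] [IsOrderedAddMonoid Y] [Module ℝ Y] [PosSMulStrictMono ℝ Y]
    (hY : DedekindComplete Y)
    (L : Submodule ℝ X)
    (hL : ∀ x : X, ∃ u : X, 0 ≤ u ∧ ∃ l ∈ L, x = u + l)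
    (p : X → Y)
    (hp_add : ∀ a b : X, 0 ≤ a → 0 ≤ b → p a + p b ≤ p (a + b))
    (hp_smul : ∀ (c : ℝ) (a : X), 0 ≤ c → 0 ≤ a → p (c • a) = c • p a)
    (T₀ : L →ₗ[ℝ] Y)
    (hT₀ : ∀ x : L, 0 ≤ (x : X) → p x ≤ T₀ x) :
    ∃ T : X →ₗ[ℝ] Y, (∀ x : L, T x = T₀ x) ∧ ∀ x : X, 0 ≤ x → p x ≤ T x := by
  have hdense (y : X) : ∃ x : L, 0 ≤ (x : X) + y := by
    obtain ⟨u, hu, l, hl, rfl⟩ := hL y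
    exact ⟨⟨-l, neg_mem hl⟩, by simpa using hu⟩
  obtain ⟨g, hfg, hg, hgp⟩ :=
    LinearPMap.DominatesOnPos.exists_domain_eq_top (f := ⟨L, T₀⟩) hY hp_add hp_smul hT₀ hdense
  refine ⟨g.toFun ∘ₗ (LinearEquiv.ofTop _ hg).symm.toLinearMap, fun x ↦ ?_, fun x hx ↦ ?_⟩
  · exact (hfg.2 rfl).symm
  · exact hgp ⟨x, hg ▸ Submodule.mem_top⟩ hx
end

section
/- In a one-codimension step of the Hahn-Banach extension with superlinear minorant: if X, Y are ordered vector spaces with Y Dedekind complete, L ⊆ X a subspace with X₊ + L = X, x₀ ∈ X \ L, p : X₊ → Y superlinear, and T₀ : L → Y linear with T₀ ≥ p on L ∩ X₊, then for all u, v ∈ L with u - x₀ ∈ X₊ and v + x₀ ∈ X₊ one has T₀u - p(u - x₀) ≥ p(v + x₀) - T₀v; consequently y₀ = sup{p(v + x₀) - T₀v : v ∈ L, v + x₀ ∈ X₊} exists in Y and the extension T(x + s x₀) = T₀x + s y₀ satisfies T ≥ p on X₊. -/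
/-!
Superadditivity of `p` and `p ≤ T₀` on `L ∩ X₊` give, for `u - x₀, v + x₀ ≥ 0`,
`p (v + x₀) + p (u - x₀) ≤ p (u + v) ≤ T₀ u + T₀ v`, which separates the candidate values
`p (v + x₀) - T₀ v` for `T x₀` from above by the values `T₀ u - p (u - x₀)`. Since `X₊ + L = X`
both families are nonempty, so Dedekind completeness provides the supremum `y₀`, which lies between
them. Positive homogeneity then scales `T ≥ p` from the two half-lines `L ± x₀` to all of
`X₊ ∩ (L + ℝ x₀)`.
-/

open Set

section

variable {X : Type*} [AddCommGroup X] [PartialOrder X] [Module ℝ X]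

lemma Submodule.exists_nonneg_add_of_nonneg_add_eq_top {L : Submodule ℝ X}
    (hL : ∀ x : X, ∃ u : X, 0 ≤ u ∧ ∃ l ∈ L, x = u + l) (x : X) :
    ∃ v : L, 0 ≤ (v : X) + x := by
  obtain ⟨u, hu, l, hl, rfl⟩ := hL x
  exact ⟨⟨-l, neg_mem hl⟩, by simpa using hu⟩

variable {Y : Type*} [AddCommGroup Y] [PartialOrder Y] [Module ℝ Y]
  {L : Submodule ℝ X} {p : X → Y} {T₀ : L →ₗ[ℝ] Y}

lemma sub_le_sub_of_superadditive [IsOrderedAddMonoid X] [IsOrderedAddMonoid Y]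
    (hp_add : ∀ a b : X, 0 ≤ a → 0 ≤ b → p a + p b ≤ p (a + b))
    (hT₀ : ∀ x : L, 0 ≤ (x : X) → p x ≤ T₀ x) {x₀ : X} {u v : L}
    (hu : 0 ≤ (u : X) - x₀) (hv : 0 ≤ (v : X) + x₀) :
    p ((v : X) + x₀) - T₀ v ≤ T₀ u - p ((u : X) - x₀) := by
  have hsum : ((v : X) + x₀) + ((u : X) - x₀) = ((u + v : L) : X) := by push_cast; abel
  have hdom : p ((v : X) + x₀) + p ((u : X) - x₀) ≤ T₀ u + T₀ v := by
    calc p ((v : X) + x₀) + p ((u : X) - x₀) ≤ p ((u + v : L) : X) := hsum ▸ hp_add _ _ hv hu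
      _ ≤ T₀ (u + v) := hT₀ _ (hsum ▸ add_nonneg hv hu)
      _ = T₀ u + T₀ v := map_add T₀ u v
  exact sub_le_sub_iff.mpr hdom

lemma le_add_smul_of_le_add [PosSMulMono ℝ X] [PosSMulMono ℝ Y]
    (hp_smul : ∀ (c : ℝ) (a : X), 0 ≤ c → 0 ≤ a → p (c • a) = c • p a)
    {x₁ : X} {y₁ : Y} (h : ∀ v : L, 0 ≤ (v : X) + x₁ → p ((v : X) + x₁) ≤ T₀ v + y₁)
    {s : ℝ} (hs : 0 < s) (l : L) (hl : 0 ≤ (l : X) + s • x₁) :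
    p ((l : X) + s • x₁) ≤ T₀ l + s • y₁ := by
  set v : L := s⁻¹ • l
  have hscale : (l : X) + s • x₁ = s • ((v : X) + x₁) := by
    simp [v, smul_add, smul_smul, mul_inv_cancel₀ hs.ne']
  have hv : 0 ≤ (v : X) + x₁ := by
    simpa [hscale, smul_smul, inv_mul_cancel₀ hs.ne'] using smul_nonneg (inv_nonneg.mpr hs.le) hl
  calc p ((l : X) + s • x₁) = s • p ((v : X) + x₁) := by rw [hscale, hp_smul _ _ hs.le hv]
    _ ≤ s • (T₀ v + y₁) := smul_le_smul_of_nonneg_left (h v hv) hs.le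
    _ = T₀ l + s • y₁ := by simp [v, smul_add, smul_smul, mul_inv_cancel₀ hs.ne']

end

theorem stmt1_general {X Y : Type*}
    [AddCommGroup X] [PartialOrder X] [IsOrderedAddMonoid X] [Module ℝ X] [PosSMulStrictMono ℝ X]
    [AddCommGroup Y] [PartialOrder Y] [IsOrderedAddMonoid Y] [Module ℝ Y] [PosSMulStrictMono ℝ Y]
    (hY : DedekindComplete Y)
    (L : Submodule ℝ X)
    (hL : ∀ x : X, ∃ u : X, 0 ≤ u ∧ ∃ l ∈ L, x = u + l)
    (x₀ : X)
    (p : X → Y)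
    (hp_add : ∀ a b : X, 0 ≤ a → 0 ≤ b → p a + p b ≤ p (a + b))
    (hp_smul : ∀ (c : ℝ) (a : X), 0 ≤ c → 0 ≤ a → p (c • a) = c • p a)
    (T₀ : L →ₗ[ℝ] Y)
    (hT₀ : ∀ x : L, 0 ≤ (x : X) → p x ≤ T₀ x) :
    (∀ u v : L, 0 ≤ (u : X) - x₀ → 0 ≤ (v : X) + x₀ →
      p ((v : X) + x₀) - T₀ v ≤ T₀ u - p ((u : X) - x₀)) ∧
    ∃ y₀ : Y,
      IsLUB {w : Y | ∃ v : L, 0 ≤ (v : X) + x₀ ∧ w = p ((v : X) + x₀) - T₀ v} y₀ ∧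
      ∀ (l : L) (s : ℝ), 0 ≤ (l : X) + s • x₀ →
        p ((l : X) + s • x₀) ≤ T₀ l + s • y₀ := by
  refine ⟨fun _ _ ↦ sub_le_sub_of_superadditive hp_add hT₀, ?_⟩
  obtain ⟨v, hv⟩ := L.exists_nonneg_add_of_nonneg_add_eq_top hL x₀
  obtain ⟨u, hu⟩ := L.exists_nonneg_add_of_nonneg_add_eq_top hL (-x₀)
  rw [← sub_eq_add_neg] at hu
  obtain ⟨y₀, hy₀⟩ :
      ∃ y₀, IsLUB {w : Y | ∃ v : L, 0 ≤ (v : X) + x₀ ∧ w = p ((v : X) + x₀) - T₀ v} y₀ :=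
    hY _ ⟨_, v, hv, rfl⟩
      ⟨_, by rintro _ ⟨v, hv, rfl⟩; exact sub_le_sub_of_superadditive hp_add hT₀ hu hv⟩
  have above : ∀ v : L, 0 ≤ (v : X) + x₀ → p ((v : X) + x₀) ≤ T₀ v + y₀ :=
    fun v hv ↦ sub_le_iff_le_add'.mp (hy₀.1 ⟨v, hv, rfl⟩)
  -- `s < 0` is the case `s > 0` for the pair `(-x₀, -y₀)`.
  have below : ∀ u : L, 0 ≤ (u : X) + -x₀ → p ((u : X) + -x₀) ≤ T₀ u + -y₀ := by
    intro u hu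
    simp only [← sub_eq_add_neg] at hu ⊢
    refine le_sub_comm.mp (hy₀.2 ?_)
    rintro _ ⟨v, hv, rfl⟩
    exact sub_le_sub_of_superadditive hp_add hT₀ hu hv
  refine ⟨y₀, hy₀, fun l s hl ↦ ?_⟩
  rcases lt_trichotomy s 0 with hs | rfl | hs
  · simpa using le_add_smul_of_le_add hp_smul below (neg_pos.mpr hs) l (by simpa using hl)
  · simpa using hT₀ l (by simpa using hl)
  · exact le_add_smul_of_le_add hp_smul above hs l hl

theorem stmt1 {X Y : Type*}
    [AddCommGroup X] [PartialOrder X] [IsOrderedAddMonoid X] [Module ℝ X] [PosSMulStrictMono ℝ X]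
    [AddCommGroup Y] [PartialOrder Y] [IsOrderedAddMonoid Y] [Module ℝ Y] [PosSMulStrictMono ℝ Y]
    (hY : DedekindComplete Y)
    (L : Submodule ℝ X)
    (hL : ∀ x : X, ∃ u : X, 0 ≤ u ∧ ∃ l ∈ L, x = u + l)
    (x₀ : X) (hx₀ : x₀ ∉ L)
    (p : X → Y)
    (hp_add : ∀ a b : X, 0 ≤ a → 0 ≤ b → p a + p b ≤ p (a + b))
    (hp_smul : ∀ (c : ℝ) (a : X), 0 ≤ c → 0 ≤ a → p (c • a) = c • p a)
    (T₀ : L →ₗ[ℝ] Y)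
    (hT₀ : ∀ x : L, 0 ≤ (x : X) → p x ≤ T₀ x) :
    (∀ u v : L, 0 ≤ (u : X) - x₀ → 0 ≤ (v : X) + x₀ →
      p ((v : X) + x₀) - T₀ v ≤ T₀ u - p ((u : X) - x₀)) ∧
    ∃ y₀ : Y,
      IsLUB {w : Y | ∃ v : L, 0 ≤ (v : X) + x₀ ∧ w = p ((v : X) + x₀) - T₀ v} y₀ ∧
      ∀ (l : L) (s : ℝ), 0 ≤ (l : X) + s • x₀ →
        p ((l : X) + s • x₀) ≤ T₀ l + s • y₀ :=
  stmt1_general hY L hL x₀ p hp_add hp_smul T₀ hT₀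
end

section
/- Let X and Y be ordered vector spaces with Y Dedekind complete, and let T₁, …, Tₙ : X₊ → Y be order bounded superlinear maps. Then the Riesz-Kantorovich transform R(x) = sup{Σⱼ Tⱼ(xⱼ) : xⱼ ∈ X₊, Σⱼ xⱼ ≤ x} is well-defined for each x ∈ X₊, is superlinear, satisfies R ≥ Tⱼ for every j, and is order bounded. -/
open Set

/-- A map is superlinear (on the positive cone): superadditive and positively homogeneous. -/
def Superlinear {X Y : Type*} [AddCommMonoid X] [PartialOrder X] [SMul ℝ X]
    [AddCommMonoid Y] [PartialOrder Y] [SMul ℝ Y] (p : X → Y) : Prop :=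
  (∀ a b : X, 0 ≤ a → 0 ≤ b → p a + p b ≤ p (a + b)) ∧
  (∀ (c : ℝ) (a : X), 0 ≤ c → 0 ≤ a → p (c • a) = c • p a)

/-- A map (considered on the positive cone) is order bounded:
images of order intervals `[0, x]` are order bounded. -/
def OrderBddOnCone {X Y : Type*} [Preorder X] [Zero X] [Preorder Y] (p : X → Y) : Prop :=
  ∀ x : X, 0 ≤ x → BddAbove (p '' Icc 0 x) ∧ BddBelow (p '' Icc 0 x)

/-- The set whose supremum defines the Riesz-Kantorovich transform of `T₁, …, Tₙ` at `x`. -/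
def rkSet {X Y : Type*} [AddCommMonoid X] [PartialOrder X] [AddCommMonoid Y]
    {n : ℕ} (T : Fin n → X → Y) (x : X) : Set Y :=
  {y | ∃ f : Fin n → X, (∀ j, 0 ≤ f j) ∧ (∑ j, f j) ≤ x ∧ y = ∑ j, T j (f j)}

/-- The class `OrderedSMul` of the older Mathlib (removed upstream), with its old fields. -/
class OrderedSMul (R M : Type*) [Semiring R] [PartialOrder R] [AddCommMonoid M] [PartialOrder M]
    [SMulWithZero R M] : Prop where
  protected smul_lt_smul_of_pos : ∀ {a b : M} {c : R}, a < b → 0 < c → c • a < c • b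
  protected lt_of_smul_lt_smul_of_pos : ∀ {a b : M} {c : R}, c • a < c • b → 0 < c → a < b

/-!
Every element of `rkSet T x` is bounded by `∑ⱼ uⱼ`, where `uⱼ` bounds `Tⱼ` on `[0, x]`, so
Dedekind completeness provides the supremum `R x`. Superadditivity of the `Tⱼ` makes
`rkSet T a + rkSet T b` dominated by `rkSet T (a + b)`, and homogeneity gives
`rkSet T (c • a) = c • rkSet T a` for `c > 0`; passing to suprema yields superlinearity of `R`.
Concentrating the whole of `x` in the `j`-th slot shows `Tⱼ x ∈ rkSet T x`, and `R` is
monotone and nonnegative on the cone, hence order bounded.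
-/

open scoped Pointwise

instance OrderedSMul.toPosSMulMono {R M : Type*} [Semiring R] [PartialOrder R]
    [AddCommMonoid M] [PartialOrder M] [SMulWithZero R M] [OrderedSMul R M] :
    PosSMulMono R M where
  smul_le_smul_of_nonneg_left c hc a b hab := by
    obtain rfl | hab := hab.eq_or_lt
    · exact le_rfl
    obtain rfl | hc := hc.eq_or_lt
    · simp
    exact (OrderedSMul.smul_lt_smul_of_pos hab hc).le

theorem Superlinear.map_zero {X Y : Type*} [AddCommMonoid X] [PartialOrder X] [SMulZeroClass ℝ X]
    [AddCommMonoid Y] [PartialOrder Y] [SMulWithZero ℝ Y] {p : X → Y} (hp : Superlinear p) :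
    p 0 = 0 := by
  simpa using hp.2 0 0 le_rfl le_rfl

section rkSet

variable {X Y : Type*} {n : ℕ} {T : Fin n → X → Y}

section AddCommMonoid

variable [AddCommMonoid X] [PartialOrder X] [AddCommMonoid Y]

theorem rkSet_mono {a b : X} (hab : a ≤ b) : rkSet T a ⊆ rkSet T b := by
  rintro y ⟨f, hf0, hfs, rfl⟩
  exact ⟨f, hf0, hfs.trans hab, rfl⟩

theorem zero_mem_rkSet (hT : ∀ j, T j 0 = 0) {x : X} (hx : 0 ≤ x) : 0 ∈ rkSet T x :=
  ⟨0, fun _ => le_rfl, by simpa using hx, by simp [hT]⟩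

theorem apply_mem_rkSet (hT : ∀ j, T j 0 = 0) (j : Fin n) {x : X} (hx : 0 ≤ x) :
    T j x ∈ rkSet T x := by
  refine ⟨Pi.single j x, fun i => ?_, by simp, ?_⟩
  · by_cases h : i = j
    · subst h; simpa using hx
    · simp [h]
  · simp [Pi.apply_single T hT]

theorem orderBddOnCone_of_isLUB_rkSet [PartialOrder Y] (hT : ∀ j, T j 0 = 0) {R : X → Y}
    (hR : ∀ x, 0 ≤ x → IsLUB (rkSet T x) (R x)) : OrderBddOnCone R := by
  intro x _
  constructor
  · refine ⟨R x, ?_⟩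
    rintro _ ⟨z, ⟨hz0, hzx⟩, rfl⟩
    exact (hR z hz0).2 fun y hy => (hR x (hz0.trans hzx)).1 (rkSet_mono hzx hy)
  · refine ⟨0, ?_⟩
    rintro _ ⟨z, ⟨hz0, -⟩, rfl⟩
    exact (hR z hz0).1 (zero_mem_rkSet hT hz0)

end AddCommMonoid

section Ordered

variable [AddCommMonoid X] [PartialOrder X] [IsOrderedAddMonoid X] [AddCommMonoid Y]

theorem le_of_sum_le_of_nonneg {f : Fin n → X} (hf0 : ∀ j, 0 ≤ f j) {x : X}
    (hfs : ∑ j, f j ≤ x) (j : Fin n) : f j ≤ x :=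
  (Finset.single_le_sum (fun i _ => hf0 i) (Finset.mem_univ j)).trans hfs

theorem rkSet_zero (hT : ∀ j, T j 0 = 0) : rkSet T (0 : X) = {0} := by
  refine Subset.antisymm ?_ (singleton_subset_iff.2 (zero_mem_rkSet hT le_rfl))
  rintro y ⟨f, hf0, hfs, rfl⟩
  have hf : ∀ j, f j = 0 := fun j => (le_of_sum_le_of_nonneg hf0 hfs j).antisymm (hf0 j)
  simp [hf, hT]

variable [PartialOrder Y] [IsOrderedAddMonoid Y]

theorem bddAbove_rkSet {x : X} (hT : ∀ j, BddAbove (T j '' Icc 0 x)) :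
    BddAbove (rkSet T x) := by
  choose u hu using hT
  refine ⟨∑ j, u j, ?_⟩
  rintro y ⟨f, hf0, hfs, rfl⟩
  exact Finset.sum_le_sum fun j _ => hu j ⟨f j, ⟨hf0 j, le_of_sum_le_of_nonneg hf0 hfs j⟩, rfl⟩

theorem exists_isLUB_rkSet (hY : DedekindComplete Y) (hT : ∀ j, T j 0 = 0)
    (hob : ∀ j, OrderBddOnCone (T j)) : ∃ R : X → Y, ∀ x, 0 ≤ x → IsLUB (rkSet T x) (R x) := by
  have hlub : ∀ x : X, 0 ≤ x → ∃ y, IsLUB (rkSet T x) y := fun x hx =>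
    hY _ ⟨0, zero_mem_rkSet hT hx⟩ (bddAbove_rkSet fun j => (hob j x hx).1)
  choose! R hR using hlub
  exact ⟨R, hR⟩

theorem exists_le_add_mem_rkSet
    (hT : ∀ j x y, 0 ≤ x → 0 ≤ y → T j x + T j y ≤ T j (x + y)) {a b : X} :
    ∀ p ∈ rkSet T a, ∀ q ∈ rkSet T b, ∃ r ∈ rkSet T (a + b), p + q ≤ r := by
  rintro _ ⟨f, hf0, hfs, rfl⟩ _ ⟨g, hg0, hgs, rfl⟩
  refine ⟨_, ⟨f + g, fun j => add_nonneg (hf0 j) (hg0 j), ?_, rfl⟩, ?_⟩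
  · simpa [Finset.sum_add_distrib] using add_le_add hfs hgs
  · rw [← Finset.sum_add_distrib]
    exact Finset.sum_le_sum fun j _ => hT j _ _ (hf0 j) (hg0 j)

end Ordered

section Module

variable [AddCommMonoid X] [PartialOrder X] [Module ℝ X] [PosSMulMono ℝ X]
  [AddCommMonoid Y] [PartialOrder Y] [Module ℝ Y]

theorem smul_rkSet_subset (hT : ∀ j, Superlinear (T j)) {c : ℝ} (hc : 0 ≤ c) (a : X) :
    c • rkSet T a ⊆ rkSet T (c • a) := by
  rintro _ ⟨_, ⟨f, hf0, hfs, rfl⟩, rfl⟩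
  refine ⟨c • f, fun j => smul_nonneg hc (hf0 j), ?_, ?_⟩
  · simpa [← Finset.smul_sum] using smul_le_smul_of_nonneg_left hfs hc
  · simp [Finset.smul_sum, (hT _).2 c _ hc (hf0 _)]

theorem rkSet_smul (hT : ∀ j, Superlinear (T j)) {c : ℝ} (hc : 0 < c) (a : X) :
    rkSet T (c • a) = c • rkSet T a := by
  refine (smul_rkSet_subset hT hc.le a).antisymm' ?_
  calc rkSet T (c • a) = c • c⁻¹ • rkSet T (c • a) := (smul_inv_smul₀ hc.ne' _).symm
    _ ⊆ c • rkSet T (c⁻¹ • c • a) :=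
        smul_set_mono (smul_rkSet_subset hT (inv_nonneg.2 hc.le) _)
    _ = c • rkSet T a := by rw [inv_smul_smul₀ hc.ne']

end Module

theorem superlinear_of_isLUB_rkSet
    [AddCommMonoid X] [PartialOrder X] [IsOrderedAddMonoid X] [Module ℝ X] [PosSMulMono ℝ X]
    [AddCommGroup Y] [PartialOrder Y] [IsOrderedAddMonoid Y] [Module ℝ Y] [PosSMulMono ℝ Y]
    (hT : ∀ j, Superlinear (T j)) {R : X → Y} (hR : ∀ x, 0 ≤ x → IsLUB (rkSet T x) (R x)) :
    Superlinear R := by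
  refine ⟨fun a b ha hb => ?_, fun c a hc ha => ?_⟩
  · refine ((hR a ha).add (hR b hb)).2 ?_
    rintro _ ⟨p, hp, q, hq, rfl⟩
    obtain ⟨r, hr, hpq⟩ := exists_le_add_mem_rkSet (fun j => (hT j).1) p hp q hq
    exact hpq.trans ((hR _ (add_nonneg ha hb)).1 hr)
  · obtain rfl | hc := hc.eq_or_lt
    · rw [zero_smul, zero_smul]
      refine (hR 0 le_rfl).unique ?_
      rw [rkSet_zero fun j => (hT j).map_zero]
      exact isLUB_singleton
    · refine (hR _ (smul_nonneg hc.le ha)).unique ?_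
      rw [rkSet_smul hT hc]
      exact (OrderIso.smulRight hc).isLUB_image'.2 (hR a ha)

end rkSet

theorem stmt2 {X Y : Type*}
    [AddCommGroup X] [PartialOrder X] [IsOrderedAddMonoid X] [Module ℝ X] [OrderedSMul ℝ X]
    [AddCommGroup Y] [PartialOrder Y] [IsOrderedAddMonoid Y] [Module ℝ Y] [OrderedSMul ℝ Y]
    (hY : DedekindComplete Y)
    {n : ℕ} (T : Fin n → X → Y)
    (hsl : ∀ j, Superlinear (T j))
    (hob : ∀ j, OrderBddOnCone (T j)) :
    ∃ R : X → Y,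
      (∀ x : X, 0 ≤ x → IsLUB (rkSet T x) (R x)) ∧
      Superlinear R ∧
      (∀ j, ∀ x : X, 0 ≤ x → T j x ≤ R x) ∧
      OrderBddOnCone R := by
  have hT0 : ∀ j, T j 0 = 0 := fun j => (hsl j).map_zero
  obtain ⟨R, hR⟩ := exists_isLUB_rkSet hY hT0 hob
  exact ⟨R, hR, superlinear_of_isLUB_rkSet hsl hR,
    fun j _ hx => (hR _ hx).1 (apply_mem_rkSet hT0 j hx), orderBddOnCone_of_isLUB_rkSet hT0 hR⟩
end

section
/- Let X, Y be ordered vector spaces with Y Dedekind complete, R : X → Y a positive linear operator, and Q : X₊ → Y a superlinear order bounded map. Then RK(Q, R) = RK⁺(Q − R) + R, where RK⁺(T) = RK(0, T) is the positive Riesz-Kantorovich transform. -/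
open Set

/-- The set defining the Riesz-Kantorovich transform of a pair at `x`. -/
def rkSet₂ {X Y : Type*} [AddCommMonoid X] [PartialOrder X] [AddCommMonoid Y]
    (Q R : X → Y) (x : X) : Set Y :=
  {y | ∃ a b : X, 0 ≤ a ∧ 0 ≤ b ∧ a + b ≤ x ∧ y = Q a + R b}

section RieszKantorovich

variable {X Y F : Type*}
  [AddCommGroup X] [PartialOrder X] [IsOrderedAddMonoid X]
  [AddCommGroup Y] [PartialOrder Y] [IsOrderedAddMonoid Y]
  [FunLike F X Y] [AddMonoidHomClass F X Y]

theorem mem_upperBounds_rkSet₂_iff {R : F} (hR : Monotone R) (Q : X → Y) (x : X) (u : Y) :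
    u ∈ upperBounds (rkSet₂ Q R x) ↔
      u - R x ∈ upperBounds {y : Y | ∃ z : X, 0 ≤ z ∧ z ≤ x ∧ y = Q z - R z} := by
  constructor
  · rintro hu _ ⟨z, hz, hzx, rfl⟩
    have hmem : Q z + R (x - z) ∈ rkSet₂ Q R x :=
      ⟨z, x - z, hz, sub_nonneg.mpr hzx, by simp, rfl⟩
    have := hu hmem
    rw [map_sub] at this
    rw [le_sub_iff_add_le]
    calc Q z - R z + R x = Q z + (R x - R z) := by abel
      _ ≤ u := this
  · rintro hu _ ⟨a, b, ha, hb, hab, rfl⟩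
    have hax : a ≤ x := (le_add_of_nonneg_right hb).trans hab
    have hbx : b ≤ x - a := le_sub_iff_add_le'.mpr hab
    calc Q a + R b ≤ Q a + R (x - a) := add_le_add_right (hR hbx) _
      _ = (Q a - R a) + R x := by rw [map_sub]; abel
      _ ≤ u := le_sub_iff_add_le.mp (hu ⟨a, ha, hax, rfl⟩)

theorem IsLUB.isLUB_rkSet₂_add {R : F} (hR : Monotone R) {Q : X → Y} {x : X} {g : Y}
    (hg : IsLUB {y : Y | ∃ z : X, 0 ≤ z ∧ z ≤ x ∧ y = Q z - R z} g) :
    IsLUB (rkSet₂ Q R x) (g + R x) :=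
  ⟨(mem_upperBounds_rkSet₂_iff hR Q x _).mpr (by simpa using hg.1),
    fun u hu => le_sub_iff_add_le.mp (hg.2 ((mem_upperBounds_rkSet₂_iff hR Q x u).mp hu))⟩

end RieszKantorovich

theorem stmt6_general {X Y : Type*}
    [AddCommGroup X] [PartialOrder X] [IsOrderedAddMonoid X] [Module ℝ X]
    [AddCommGroup Y] [PartialOrder Y] [IsOrderedAddMonoid Y] [Module ℝ Y]
    (R : X →ₗ[ℝ] Y) (hRpos : ∀ x : X, 0 ≤ x → 0 ≤ R x)
    (Q : X → Y)
    (F G : X → Y)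
    (hF : ∀ x : X, 0 ≤ x → IsLUB (rkSet₂ Q (⇑R) x) (F x))
    (hG : ∀ x : X, 0 ≤ x → IsLUB {y : Y | ∃ z : X, 0 ≤ z ∧ z ≤ x ∧ y = Q z - R z} (G x)) :
    ∀ x : X, 0 ≤ x → F x = G x + R x := fun x hx =>
  (hF x hx).unique ((hG x hx).isLUB_rkSet₂_add ((monotone_iff_map_nonneg R).mpr hRpos))

/-- For a positive linear operator `R` and a superlinear order bounded map `Q`:
`RK(Q, R) = RK⁺(Q − R) + R`, where `RK⁺(T)(x) = sup {T z : 0 ≤ z ≤ x}`. -/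
theorem stmt6 {X Y : Type*}
    [AddCommGroup X] [PartialOrder X] [IsOrderedAddMonoid X] [Module ℝ X] [PosSMulStrictMono ℝ X]
    [AddCommGroup Y] [PartialOrder Y] [IsOrderedAddMonoid Y] [Module ℝ Y] [PosSMulStrictMono ℝ Y]
    (hY : DedekindComplete Y)
    (R : X →ₗ[ℝ] Y) (hRpos : ∀ x : X, 0 ≤ x → 0 ≤ R x)
    (Q : X → Y) (hQ : Superlinear Q) (hQb : OrderBddOnCone Q)
    (F G : X → Y)
    (hF : ∀ x : X, 0 ≤ x → IsLUB (rkSet₂ Q (⇑R) x) (F x))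
    (hG : ∀ x : X, 0 ≤ x → IsLUB {y : Y | ∃ z : X, 0 ≤ z ∧ z ≤ x ∧ y = Q z - R z} (G x)) :
    ∀ x : X, 0 ≤ x → F x = G x + R x :=
  stmt6_general R hRpos Q F G hF hG
end

section
/- Suppose an ordered vector space X carries a locally convex Hausdorff topology in which every order interval [0,x], x ∈ X₊, is compact. Then X satisfies the Riesz Decomposition Property if and only if X satisfies the L-Riesz Decomposition Property with L the space of continuous linear functionals on X. -/
open Set Pointwise

/-- `g` strictly separates the point `z` from the set `A`. -/
def StrictSep {X Y : Type*} [Preorder Y] (g : X → Y) (z : X) (A : Set X) : Prop :=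
  (∃ c : Y, g z < c ∧ ∀ a ∈ A, c ≤ g a) ∨ (∃ c : Y, c < g z ∧ ∀ a ∈ A, g a ≤ c)

/-- The Riesz Decomposition Property: `[0,x] + [0,y] = [0,x+y]` for positive `x, y`. -/
def RDP (X : Type*) [AddCommGroup X] [PartialOrder X] [IsOrderedAddMonoid X] : Prop :=
  ∀ x y : X, 0 ≤ x → 0 ≤ y → Icc (0 : X) x + Icc (0 : X) y = Icc (0 : X) (x + y)

/-!
The inclusion `[0,x] + [0,y] ⊆ [0,x+y]` always holds, so the Riesz Decomposition Property fails
exactly when some `z ∈ [0,x+y]` lies outside `[0,x] + [0,y]`. That set is a sum of two compact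
convex sets, hence compact and convex, so by Hahn–Banach such a `z` is strictly separated from it
by a continuous linear functional; conversely under the Riesz Decomposition Property there is no
such `z` at all.
-/

theorem Icc_zero_add_Icc_zero_subset {X : Type*} [AddCommMonoid X] [PartialOrder X]
    [IsOrderedAddMonoid X] (x y : X) : Icc (0 : X) x + Icc (0 : X) y ⊆ Icc 0 (x + y) := by
  simpa only [add_zero] using Set.Icc_add_Icc_subset (0 : X) x 0 y

theorem exists_strictSep_of_notMem_of_isCompact {X : Type*} [AddCommGroup X] [Module ℝ X]
    [TopologicalSpace X] [IsTopologicalAddGroup X] [ContinuousSMul ℝ X]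
    [LocallyConvexSpace ℝ X] [T2Space X] {K : Set X} (hKconv : Convex ℝ K) (hK : IsCompact K)
    {z : X} (hz : z ∉ K) : ∃ f : X →L[ℝ] ℝ, StrictSep (⇑f) z K := by
  obtain ⟨f, u, hfz, hfK⟩ := geometric_hahn_banach_point_closed hKconv hK.isClosed hz
  exact ⟨f, Or.inl ⟨u, hfz, fun a ha => (hfK a ha).le⟩⟩

theorem stmt7_general {X : Type*}
    [AddCommGroup X] [PartialOrder X] [IsOrderedAddMonoid X] [Module ℝ X]
    [PosSMulStrictMono ℝ X]
    [TopologicalSpace X] [IsTopologicalAddGroup X] [ContinuousSMul ℝ X]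
    [LocallyConvexSpace ℝ X] [T2Space X]
    (hcomp : ∀ x : X, 0 ≤ x → IsCompact (Icc (0 : X) x)) :
    RDP X ↔
      (∀ x y z : X, 0 ≤ x → 0 ≤ y → z ∈ Icc (0 : X) (x + y) →
        z ∉ Icc (0 : X) x + Icc (0 : X) y →
        ∀ f : X →L[ℝ] ℝ, ¬ StrictSep (⇑f) z (Icc (0 : X) x + Icc (0 : X) y)) := by
  constructor
  · intro hRDP x y z hx hy hz hz' _ _
    exact hz' ((hRDP x y hx hy) ▸ hz)
  · intro hLRDP x y hx hy
    refine (Icc_zero_add_Icc_zero_subset x y).antisymm fun z hz => ?_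
    by_contra hz'
    obtain ⟨f, hf⟩ := exists_strictSep_of_notMem_of_isCompact
      ((convex_Icc 0 x).add (convex_Icc 0 y)) ((hcomp x hx).add (hcomp y hy)) hz'
    exact hLRDP x y z hx hy hz hz' f hf

/-- If order intervals of a locally convex Hausdorff ordered space are compact, the
Riesz Decomposition Property is equivalent to the `L`-Riesz Decomposition Property for
`L` the continuous linear functionals: no `z ∈ [0,x+y] \ ([0,x]+[0,y])` can be strictly
separated from `[0,x]+[0,y]` by a continuous linear functional. -/
theorem stmt7 {X : Type*}
    [AddCommGroup X] [PartialOrder X] [IsOrderedAddMonoid X] [Module ℝ X]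
    [PosSMulStrictMono ℝ X] [PosSMulReflectLT ℝ X]
    [TopologicalSpace X] [IsTopologicalAddGroup X] [ContinuousSMul ℝ X]
    [LocallyConvexSpace ℝ X] [T2Space X]
    (hcomp : ∀ x : X, 0 ≤ x → IsCompact (Icc (0 : X) x)) :
    RDP X ↔
      (∀ x y z : X, 0 ≤ x → 0 ≤ y → z ∈ Icc (0 : X) (x + y) →
        z ∉ Icc (0 : X) x + Icc (0 : X) y →
        ∀ f : X →L[ℝ] ℝ, ¬ StrictSep (⇑f) z (Icc (0 : X) x + Icc (0 : X) y)) :=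
  stmt7_general hcomp
end

section
/- Let X be a vector space and B ⊆ A ⊆ X nonempty convex line-open sets (A = int A, B = int B in the algebraic/core sense). If A \ B is nonempty, then it has a nonempty algebraic interior; moreover there exist a linear functional g : X → ℝ and α ∈ ℝ with A ∩ {z : g(z) > α} ⊆ int(A \ B). -/
open Set

/-- `e` is an internal (core, algebraically interior) point of `A`. -/
def IsCorePoint {X : Type*} [AddCommGroup X] [Module ℝ X] (A : Set X) (e : X) : Prop :=
  ∀ x : X, ∃ ε : ℝ, 0 < ε ∧ ∀ α : ℝ, |α| < ε → e + α • x ∈ A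

/-- The algebraic interior (core) of a set. -/
def coreSet {X : Type*} [AddCommGroup X] [Module ℝ X] (A : Set X) : Set X :=
  {e | IsCorePoint A e}

/-!
Translating a point `b₀ ∈ B` to the origin, `B - b₀` is convex and absorbent, so its gauge is
sublinear, and Hahn–Banach gives a linear functional `g` below this gauge with `g (a - b₀) = 1`
for a chosen `a ∈ A \ B`. Core points of `B - b₀` have gauge `< 1`, so `g < α := g b₀ + 1` on
`B` while `α ≤ g a`. The set `A ∩ {g > α}` then misses `B`, and, as an intersection of two
line-open sets, it is line-open; it is nonempty because `g` increases along the ray from `b₀`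
through `a`, and `a` is a core point of `A`.
-/

open Filter Topology Pointwise

section CorePoint

variable {X : Type*} [AddCommGroup X] [Module ℝ X] {D E : Set X} {e : X}

theorem isCorePoint_iff_eventually :
    IsCorePoint D e ↔ ∀ x, ∀ᶠ t : ℝ in 𝓝 0, e + t • x ∈ D := by
  simp only [IsCorePoint, Metric.eventually_nhds_iff, Real.dist_0_eq_abs, gt_iff_lt]

namespace IsCorePoint

theorem mono (h : IsCorePoint D e) (hDE : D ⊆ E) : IsCorePoint E e := fun x =>
  let ⟨ε, hε, hmem⟩ := h x
  ⟨ε, hε, fun α hα => hDE (hmem α hα)⟩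

theorem inter (hD : IsCorePoint D e) (hE : IsCorePoint E e) : IsCorePoint (D ∩ E) e :=
  isCorePoint_iff_eventually.2 fun x =>
    (isCorePoint_iff_eventually.1 hD x).and (isCorePoint_iff_eventually.1 hE x)

theorem mem (h : IsCorePoint D e) : e ∈ D := by
  obtain ⟨ε, hε, hmem⟩ := h 0
  simpa using hmem 0 (by simpa using hε)

theorem exists_pos_add_smul_mem (h : IsCorePoint D e) (x : X) :
    ∃ t : ℝ, 0 < t ∧ e + t • x ∈ D :=
  (((isCorePoint_iff_eventually.1 h x).filter_mono nhdsWithin_le_nhds).and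
    (self_mem_nhdsWithin (s := Ioi 0))).exists.imp fun _ ht => ⟨ht.2, ht.1⟩

theorem absorbent (h : IsCorePoint D 0) : Absorbent ℝ D :=
  absorbent_iff_eventually_nhdsNE_zero.2 fun x =>
    ((isCorePoint_iff_eventually.1 h x).filter_mono nhdsWithin_le_nhds).mono fun t ht => by
      rwa [zero_add] at ht

theorem gauge_lt_one (h : IsCorePoint D e) : gauge D e < 1 := by
  obtain ⟨t, ht, hmem⟩ := h.exists_pos_add_smul_mem e
  have ht' : 0 < 1 + t := by linarith
  have hscaled : e ∈ (1 + t)⁻¹ • D := by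
    rw [mem_smul_set_iff_inv_smul_mem₀ (inv_ne_zero ht'.ne'), inv_inv, add_smul, one_smul]
    exact hmem
  calc gauge D e ≤ (1 + t)⁻¹ := gauge_le_of_mem (inv_nonneg.2 ht'.le) hscaled
    _ < 1 := inv_lt_one_of_one_lt₀ (by linarith)

end IsCorePoint

theorem isCorePoint_preimage_add_right {v : X} :
    IsCorePoint ((· + v) ⁻¹' D) e ↔ IsCorePoint D (e + v) := by
  simp only [IsCorePoint, mem_preimage, add_right_comm]

theorem isCorePoint_setOf_lt (g : X →ₗ[ℝ] ℝ) {α : ℝ} (h : α < g e) :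
    IsCorePoint {z | α < g z} e := by
  refine isCorePoint_iff_eventually.2 fun x => ?_
  have hcont : Continuous fun t : ℝ => g e + t * g x := by fun_prop
  simpa only [mem_ofPred_eq, map_add, map_smul, smul_eq_mul] using
    hcont.continuousAt.eventually (lt_mem_nhds (by simpa using h))

end CorePoint

section Separation

variable {X : Type*} [AddCommGroup X] [Module ℝ X]

theorem exists_linearMap_eq_one_lt_one_of_isCorePoint {s : Set X} (hs₀ : IsCorePoint s 0)
    (hs₁ : Convex ℝ s) {x₀ : X} (hx₀ : x₀ ∉ s) :
    ∃ f : X →ₗ[ℝ] ℝ, f x₀ = 1 ∧ ∀ x, IsCorePoint s x → f x < 1 := by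
  have hx₀ne : x₀ ≠ 0 := (ne_of_mem_of_not_mem hs₀.mem hx₀).symm
  let f : X →ₗ.[ℝ] ℝ := LinearPMap.mkSpanSingleton x₀ 1 hx₀ne
  have hgauge : 1 ≤ gauge s x₀ :=
    one_le_gauge_of_notMem (hs₁.starConvex hs₀.mem) (hs₀.absorbent x₀) hx₀
  obtain ⟨φ, hφf, hφs⟩ := exists_extension_of_le_sublinear f (gauge s)
    (fun c hc => gauge_smul_of_nonneg hc.le) (gauge_add_le hs₁ hs₀.absorbent) <| by
      rintro ⟨x, hx⟩
      obtain ⟨y, rfl⟩ := Submodule.mem_span_singleton.1 hx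
      rw [LinearPMap.mkSpanSingleton'_apply, smul_eq_mul, mul_one]
      rcases le_or_gt y 0 with hy | hy
      · exact hy.trans (gauge_nonneg _)
      · rw [gauge_smul_of_nonneg hy.le, smul_eq_mul]
        exact le_mul_of_one_le_right hy.le hgauge
  refine ⟨φ, ?_, fun x hx => (hφs x).trans_lt hx.gauge_lt_one⟩
  exact (hφf ⟨x₀, Submodule.mem_span_singleton_self x₀⟩).trans
    (LinearPMap.mkSpanSingleton_apply ℝ ℝ (σ := RingHom.id ℝ) hx₀ne 1)

theorem exists_linearMap_lt_le_of_isCorePoint {B : Set X} (hB : Convex ℝ B) {b₀ : X}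
    (hb₀ : IsCorePoint B b₀) {a : X} (ha : a ∉ B) :
    ∃ (g : X →ₗ[ℝ] ℝ) (α : ℝ), (∀ b, IsCorePoint B b → g b < α) ∧ α ≤ g a := by
  obtain ⟨g, hga, hgB⟩ := exists_linearMap_eq_one_lt_one_of_isCorePoint (x₀ := a - b₀)
    (isCorePoint_preimage_add_right.2 (by rwa [zero_add])) (hB.translate_preimage_left b₀)
    (by simpa using ha)
  refine ⟨g, g b₀ + 1, fun b hb => ?_, ?_⟩
  · have := hgB (b - b₀) (isCorePoint_preimage_add_right.2 (by rwa [sub_add_cancel]))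
    rw [map_sub] at this
    linarith
  · rw [map_sub] at hga
    linarith

end Separation

theorem stmt10_general {X : Type*} [AddCommGroup X] [Module ℝ X]
    (A B : Set X)
    (hBne : B.Nonempty)
    (hBconv : Convex ℝ B)
    (hAopen : A = coreSet A) (hBopen : B = coreSet B)
    (hne : (A \ B).Nonempty) :
    (coreSet (A \ B)).Nonempty ∧
    ∃ (g : X →ₗ[ℝ] ℝ) (α : ℝ),
      (A ∩ {z : X | α < g z}).Nonempty ∧
      A ∩ {z : X | α < g z} ⊆ coreSet (A \ B) := by
  obtain ⟨b₀, hb₀⟩ := hBne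
  obtain ⟨a, haA, haB⟩ := hne
  obtain ⟨g, α, hgB, hαa⟩ :=
    exists_linearMap_lt_le_of_isCorePoint hBconv (hBopen.subset hb₀) haB
  have hsub : A ∩ {z | α < g z} ⊆ coreSet (A \ B) := fun z ⟨hzA, hzg⟩ =>
    IsCorePoint.mono (IsCorePoint.inter (hAopen.subset hzA) (isCorePoint_setOf_lt g hzg))
      fun w ⟨hwA, hwg⟩ => ⟨hwA, fun hwB => (hgB w (hBopen.subset hwB)).not_gt hwg⟩
  obtain ⟨t, ht, hat⟩ := IsCorePoint.exists_pos_add_smul_mem (hAopen.subset haA) (a - b₀)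
  have hαat : α < g (a + t • (a - b₀)) := by
    have := hgB b₀ (hBopen.subset hb₀)
    simp only [map_add, map_smul, map_sub, smul_eq_mul]
    nlinarith
  exact ⟨⟨_, hsub ⟨hat, hαat⟩⟩, g, α, ⟨_, hat, hαat⟩, hsub⟩

/-- If `B ⊆ A` are nonempty convex line-open sets and `A \ B` is nonempty, then `A \ B`
has nonempty algebraic interior; moreover `A ∩ {z : g z > α} ⊆ core (A \ B)` for some
linear functional `g` and some `α`, with this intersection nonempty. -/
theorem stmt10 {X : Type*} [AddCommGroup X] [Module ℝ X]
    (A B : Set X)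
    (hBA : B ⊆ A) (hAne : A.Nonempty) (hBne : B.Nonempty)
    (hAconv : Convex ℝ A) (hBconv : Convex ℝ B)
    (hAopen : A = coreSet A) (hBopen : B = coreSet B)
    (hne : (A \ B).Nonempty) :
    (coreSet (A \ B)).Nonempty ∧
    ∃ (g : X →ₗ[ℝ] ℝ) (α : ℝ),
      (A ∩ {z : X | α < g z}).Nonempty ∧
      A ∩ {z : X | α < g z} ⊆ coreSet (A \ B) :=
  stmt10_general A B hBne hBconv hAopen hBopen hne
end

section
/- Let X, Y be ordered vector spaces and L ⊆ Lin(X,Y) a linear subspace such that for every T ∈ L the positive Riesz-Kantorovich transform RK⁺(T)(x) = sup{T(y) : 0 ≤ y ≤ x} is well-defined and additive on X₊. Then X satisfies the L-Riesz Decomposition Property. -/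
open Set Pointwise

-- A lower separation by `g` is an upper separation by `-g`.
theorem not_strictSep_of_isLUB {X Y : Type*} [AddCommGroup Y] [PartialOrder Y]
    [IsOrderedAddMonoid Y] {g : X → Y} {z : X} {A : Set X} {s t : Y}
    (hs : IsLUB (g '' A) s) (hgz : g z ≤ s) (ht : IsLUB ((-g) '' A) t) (hgz' : -g z ≤ t) :
    ¬ StrictSep g z A := by
  rintro (⟨c, hzc, hc⟩ | ⟨c, hcz, hc⟩)
  · have hct : t ≤ -c := ht.2 <| by
      rintro _ ⟨a, ha, rfl⟩
      exact neg_le_neg (hc a ha)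
    exact (hgz'.trans hct).not_gt (neg_lt_neg hzc)
  · have hsc : s ≤ c := hs.2 <| by
      rintro _ ⟨a, ha, rfl⟩
      exact hc a ha
    exact (hgz.trans hsc).not_gt hcz

theorem setOf_exists_Icc_eq_apply {X Y : Type*} [Preorder X] [Zero X] (g : X → Y) (x : X) :
    {y : Y | ∃ z : X, 0 ≤ z ∧ z ≤ x ∧ y = g z} = g '' Icc 0 x := by
  ext y
  simp only [mem_ofPred_eq, mem_image, mem_Icc, and_assoc, eq_comm]

theorem stmt13_general {X Y : Type*}
    [AddCommGroup X] [PartialOrder X] [IsOrderedAddMonoid X] [Module ℝ X]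
    [AddCommGroup Y] [PartialOrder Y] [IsOrderedAddMonoid Y] [Module ℝ Y]
    (L : Submodule ℝ (X →ₗ[ℝ] Y))
    (hRK : ∀ T : X →ₗ[ℝ] Y, T ∈ L → ∃ R : X → Y,
      (∀ x : X, 0 ≤ x → IsLUB {y : Y | ∃ z : X, 0 ≤ z ∧ z ≤ x ∧ y = T z} (R x)) ∧
      (∀ x y : X, 0 ≤ x → 0 ≤ y → R (x + y) = R x + R y)) :
    ∀ x y z : X, 0 ≤ x → 0 ≤ y → z ∈ Icc (0 : X) (x + y) →
      z ∉ Icc (0 : X) x + Icc (0 : X) y →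
      ∀ T ∈ L, ¬ StrictSep (⇑T) z (Icc (0 : X) x + Icc (0 : X) y) := by
  intro x y z hx hy hz _ T hT
  -- `RK⁺(S)(x + y)` bounds `S` on `[0, x + y] ∋ z`, and by additivity it is the supremum of `S`
  -- on `[0, x] + [0, y]`.
  have sup_exceeds : ∀ S ∈ L, ∃ s, IsLUB (S '' (Icc 0 x + Icc 0 y)) s ∧ S z ≤ s := by
    intro S hS
    obtain ⟨R, hlub, hadd⟩ := hRK S hS
    simp only [setOf_exists_Icc_eq_apply] at hlub
    refine ⟨R (x + y), ?_, (hlub _ (add_nonneg hx hy)).1 (mem_image_of_mem S hz)⟩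
    rw [hadd x y hx hy, image_add]
    exact (hlub x hx).add (hlub y hy)
  obtain ⟨s, hs, hzs⟩ := sup_exceeds T hT
  obtain ⟨t, ht, hzt⟩ := sup_exceeds (-T) (L.neg_mem hT)
  exact not_strictSep_of_isLUB hs hzs ht hzt

/-- If for every `T ∈ L` the positive Riesz-Kantorovich transform
`RK⁺(T)(x) = sup {T z : 0 ≤ z ≤ x}` is well-defined and additive on the positive cone,
then `X` satisfies the `L`-Riesz Decomposition Property. -/
theorem stmt13 {X Y : Type*}
    [AddCommGroup X] [PartialOrder X] [IsOrderedAddMonoid X] [Module ℝ X] [PosSMulStrictMono ℝ X]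
    [AddCommGroup Y] [PartialOrder Y] [IsOrderedAddMonoid Y] [Module ℝ Y] [PosSMulStrictMono ℝ Y]
    (L : Submodule ℝ (X →ₗ[ℝ] Y))
    (hRK : ∀ T : X →ₗ[ℝ] Y, T ∈ L → ∃ R : X → Y,
      (∀ x : X, 0 ≤ x → IsLUB {y : Y | ∃ z : X, 0 ≤ z ∧ z ≤ x ∧ y = T z} (R x)) ∧
      (∀ x y : X, 0 ≤ x → 0 ≤ y → R (x + y) = R x + R y)) :
    ∀ x y z : X, 0 ≤ x → 0 ≤ y → z ∈ Icc (0 : X) (x + y) →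
      z ∉ Icc (0 : X) x + Icc (0 : X) y →
      ∀ T ∈ L, ¬ StrictSep (⇑T) z (Icc (0 : X) x + Icc (0 : X) y) :=
  stmt13_general L hRK
end

section
/- Let X be an ordered vector space with a locally convex topology (not necessarily Hausdorff) whose positive cone is generating, let p : X₊ → ℝ be a continuous superlinear map, and let x ∈ X₊, y ∈ ℝ with y > p(x). Then there exists a continuous linear functional M : X → ℝ with M ≥ p on X₊ and M(x) < y. -/
/-!
Over the positive cone, the hypograph of a superlinear `p` is a convex cone in `X × ℝ`, and by
continuity of `p` at `x` the point `(x, y)` lies outside its closure. Hahn–Banach separation of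
`(x, y)` from this closed cone gives a functional `f` on `X × ℝ`, nonnegative on the cone and
negative at `(x, y)`; its kernel is the graph of the sought `M`.
-/

open Filter Topology

section Hypograph

variable {X : Type*} [AddCommGroup X] [PartialOrder X] [IsOrderedAddMonoid X] [Module ℝ X]
  [PosSMulMono ℝ X]

def posHypographCone (p : X → ℝ) (hp_add : ∀ a b : X, 0 ≤ a → 0 ≤ b → p a + p b ≤ p (a + b))
    (hp_smul : ∀ (c : ℝ) (a : X), 0 ≤ c → 0 ≤ a → p (c • a) = c • p a) :
    PointedCone ℝ (X × ℝ) where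
  carrier := {w | 0 ≤ w.1 ∧ w.2 ≤ p w.1}
  add_mem' := fun ⟨ha, hs⟩ ⟨hb, ht⟩ =>
    ⟨add_nonneg ha hb, (add_le_add hs ht).trans (hp_add _ _ ha hb)⟩
  zero_mem' := ⟨le_rfl, by simpa using (hp_smul 0 0 le_rfl le_rfl).ge⟩
  smul_mem' := fun c w ⟨hw, hs⟩ => by
    refine ⟨smul_nonneg c.2 hw, ?_⟩
    change (c : ℝ) • w.2 ≤ p ((c : ℝ) • w.1)
    rw [hp_smul _ _ c.2 hw]
    exact smul_le_smul_of_nonneg_left hs c.2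

variable {p : X → ℝ} {hp_add : ∀ a b : X, 0 ≤ a → 0 ≤ b → p a + p b ≤ p (a + b)}
  {hp_smul : ∀ (c : ℝ) (a : X), 0 ≤ c → 0 ≤ a → p (c • a) = c • p a}

theorem mk_mem_posHypographCone {z : X} {t : ℝ} :
    (z, t) ∈ posHypographCone p hp_add hp_smul ↔ 0 ≤ z ∧ t ≤ p z :=
  Iff.rfl

theorem notMem_closure_posHypographCone [TopologicalSpace X] {x : X} {y : ℝ}
    (hp : ContinuousWithinAt p {z | 0 ≤ z} x) (hy : p x < y) :
    (x, y) ∉ closure (posHypographCone p hp_add hp_smul : Set (X × ℝ)) := by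
  rw [mem_closure_iff_nhdsWithin_neBot]
  intro hne
  set K : Set (X × ℝ) := ↑(posHypographCone p hp_add hp_smul)
  have hfst : Tendsto Prod.fst (𝓝[K] (x, y)) (𝓝[{z | 0 ≤ z}] x) :=
    continuous_fst.continuousWithinAt.tendsto_nhdsWithin fun _ hw => hw.1
  have hle : ∀ᶠ w in 𝓝[K] (x, y), w.2 ≤ p w.1 :=
    eventually_mem_nhdsWithin.mono fun _ hw => hw.2
  exact hy.not_ge <|
    le_of_tendsto_of_tendsto continuous_snd.continuousWithinAt.tendsto (hp.tendsto.comp hfst) hle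

end Hypograph

/-- Since `p x < y`, the functional `f` is negative on the vertical direction `(0, 1)`;
dividing `f (·, 0)` by `-f (0, 1)` gives the majorant. -/
theorem exists_majorant_of_graph_nonneg {X : Type*} [AddCommGroup X] [Module ℝ X]
    [TopologicalSpace X] {p : X → ℝ} {S : Set X} {x : X} {y : ℝ} (f : X × ℝ →L[ℝ] ℝ)
    (hf : ∀ z ∈ S, 0 ≤ f (z, p z)) (hx : x ∈ S) (hy : p x < y) (hfxy : f (x, y) < 0) :
    ∃ M : X →L[ℝ] ℝ, (∀ z ∈ S, p z ≤ M z) ∧ M x < y := by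
  set c := f (0, 1)
  have hsplit : ∀ z t, f (z, t) = f (z, 0) + t * c := fun z t => by
    rw [← smul_eq_mul, ← map_smul, ← map_add]
    simp
  have hc : c < 0 := by
    have := hf x hx
    rw [hsplit] at this hfxy
    nlinarith
  set M : X →L[ℝ] ℝ := (-c)⁻¹ • f.comp (.inl ℝ X ℝ)
  have hM : ∀ z, M z = f (z, 0) / -c := fun z => by simp [M, div_eq_inv_mul]
  refine ⟨M, fun z hz => ?_, ?_⟩
  · have := hf z hz
    rw [hsplit] at this
    rw [hM, le_div_iff₀ (neg_pos.2 hc)]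
    linarith
  · rw [hsplit] at hfxy
    rw [hM, div_lt_iff₀ (neg_pos.2 hc)]
    linarith

theorem stmt15_general {X : Type*}
    [AddCommGroup X] [PartialOrder X] [IsOrderedAddMonoid X] [Module ℝ X] [PosSMulStrictMono ℝ X]
    [TopologicalSpace X] [IsTopologicalAddGroup X] [ContinuousSMul ℝ X]
    [LocallyConvexSpace ℝ X]
    (p : X → ℝ)
    (hp_add : ∀ a b : X, 0 ≤ a → 0 ≤ b → p a + p b ≤ p (a + b))
    (hp_smul : ∀ (c : ℝ) (a : X), 0 ≤ c → 0 ≤ a → p (c • a) = c • p a)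
    (hp_cont : ContinuousOn p {z : X | 0 ≤ z})
    (x : X) (hx : 0 ≤ x) (y : ℝ) (hy : p x < y) :
    ∃ M : X →L[ℝ] ℝ, (∀ z : X, 0 ≤ z → p z ≤ M z) ∧ M x < y := by
  set C := posHypographCone p hp_add hp_smul
  obtain ⟨f, hfC, hfxy⟩ := ProperCone.hyperplane_separation_point (Submodule.closure C)
    (notMem_closure_posHypographCone (hp_cont x hx) hy)
  exact exists_majorant_of_graph_nonneg (S := {z | 0 ≤ z}) f
    (fun z hz => hfC _ (subset_closure (mk_mem_posHypographCone.2 ⟨hz, le_rfl⟩))) hx hy hfxy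

/-- In an ordered locally convex space with generating cone, a continuous superlinear
functional with `y > p x` admits a continuous linear majorant `M ≥ p` with `M x < y`. -/
theorem stmt15 {X : Type*}
    [AddCommGroup X] [PartialOrder X] [IsOrderedAddMonoid X] [Module ℝ X] [PosSMulStrictMono ℝ X]
    [TopologicalSpace X] [IsTopologicalAddGroup X] [ContinuousSMul ℝ X]
    [LocallyConvexSpace ℝ X]
    (hgen : ∀ x : X, ∃ a b : X, 0 ≤ a ∧ 0 ≤ b ∧ x = a - b)
    (p : X → ℝ)
    (hp_add : ∀ a b : X, 0 ≤ a → 0 ≤ b → p a + p b ≤ p (a + b))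
    (hp_smul : ∀ (c : ℝ) (a : X), 0 ≤ c → 0 ≤ a → p (c • a) = c • p a)
    (hp_cont : ContinuousOn p {z : X | 0 ≤ z})
    (x : X) (hx : 0 ≤ x) (y : ℝ) (hy : p x < y) :
    ∃ M : X →L[ℝ] ℝ, (∀ z : X, 0 ≤ z → p z ≤ M z) ∧ M x < y :=
  stmt15_general p hp_add hp_smul hp_cont x hx y hy
end
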